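/- Let m ≥ 1 and let T = (T_1,T_2) be a 2-tiling of the Aztec diamond AD_m with no interactions. For 1 ≤ i ≤ m and c ∈ {1,2}, let h^{(c)}_i : [−m−1+i, m+1−i] → ℝ be the piecewise-linear function whose graph is the i-th path of T_c. Then for every 1 ≤ i ≤ m, h^{(1)}_i(x) ≤ h^{(2)}_i(x) for all x ∈ [−m−1+i, m+1−i], and, if i ≤ m−1, h^{(1)}_i(x) > h^{(2)}_{i+1}(x) for all x ∈ [−m+i, m−i]. -/

import Mathlib

namespace Aztec

/-- A lattice square, identified by its lower-left corner. -/
abbrev Cell : Type := ℤ × ℤ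

/-- The unit lattice square with lower-left corner `c` is contained in the
region `{(x, y) : |x| + |y| ≤ m + 1}`, i.e. lies in the Aztec diamond of rank `m`. -/
def inAD (m : ℕ) (c : Cell) : Prop :=
  max |c.1| |c.1 + 1| + max |c.2| |c.2 + 1| ≤ (m : ℤ) + 1

/-- A domino: either the horizontal `2×1` rectangle made of the lattice squares with
lower-left corners `(a, b)` and `(a+1, b)`, or the vertical `1×2` rectangle made of the
lattice squares with lower-left corners `(a, b)` and `(a, b+1)`. -/
inductive Domino : Type where
  | horiz : ℤ → ℤ → Domino
  | vert : ℤ → ℤ → Domino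
deriving DecidableEq

/-- The two lattice squares occupied by a domino. -/
def Domino.cells : Domino → Finset Cell
  | .horiz a b => {(a, b), (a + 1, b)}
  | .vert a b => {(a, b), (a, b + 1)}

/-- A domino tiling of the Aztec diamond of rank `m`: a set of dominos all of whose
squares lie in the Aztec diamond, such that every square of the Aztec diamond is covered
by exactly one domino. -/
structure Tiling (m : ℕ) where
  dominos : Finset Domino
  inside : ∀ d ∈ dominos, ∀ c ∈ d.cells, inAD m c
  covers : ∀ c : Cell, inAD m c → ∃! d, d ∈ dominos ∧ c ∈ d.cells

/-- The square `[a,a+1] × [b,b+1]` is gray iff `a + b + m` is even. -/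
def grayB (m : ℕ) (c : Cell) : Bool := (c.1 + c.2 + (m : ℤ)) % 2 == 0

/-- The square `[a,a+1] × [b,b+1]` is white iff `a + b + m` is odd. -/
def whiteB (m : ℕ) (c : Cell) : Bool := ! grayB m c

/-- The steps of a Schröder-type path: North-East `(1,1)`, South-East `(1,-1)`,
East `(2,0)`. -/
inductive Step : Type where
  | up : Step
  | down : Step
  | flat : Step
deriving DecidableEq

/-- The displacement vector of a step. -/
def Step.vec : Step → ℝ × ℝ
  | .up => (1, 1)
  | .down => (1, -1)
  | .flat => (2, 0)

/-- The union in `ℝ²` of the segments of a path starting at `p` with the given steps. -/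
def pathSet : ℝ × ℝ → List Step → Set (ℝ × ℝ)
  | p, [] => {p}
  | p, s :: rest => segment ℝ p (p + s.vec) ∪ pathSet (p + s.vec) rest

/-- The endpoint of a path starting at `p` with the given steps. -/
def endpt : ℝ × ℝ → List Step → ℝ × ℝ
  | p, [] => p
  | p, s :: rest => endpt (p + s.vec) rest

/-- The starting point `(-m-1+i, 1/2-i)` of the `i`-th path (`i : Fin m` is 0-indexed,
corresponding to `i+1 ∈ {1, …, m}`). -/
noncomputable def startPt (m : ℕ) (i : Fin m) : ℝ × ℝ :=
  (-(m : ℝ) - 1 + (((i : ℕ) : ℝ) + 1), 1 / 2 - (((i : ℕ) : ℝ) + 1))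

/-- The ending point `(m+1-i, 1/2-i)` of the `i`-th path. -/
noncomputable def finishPt (m : ℕ) (i : Fin m) : ℝ × ℝ :=
  ((m : ℝ) + 1 - (((i : ℕ) : ℝ) + 1), 1 / 2 - (((i : ℕ) : ℝ) + 1))

/-- The segment drawn on a domino: a type-I domino (gray right square) carries the
horizontal segment joining the midpoints of its left and right edges; a type-II domino
(gray top square) carries the segment from the midpoint of the left edge of its bottom
square to the midpoint of the right edge of its top square; a type-IV domino (gray bottom
square) carries the segment from the midpoint of the left edge of its top square to the
midpoint of the right edge of its bottom square; a type-III domino carries no segment. -/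
noncomputable def dominoSeg (m : ℕ) : Domino → Set (ℝ × ℝ)
  | .horiz a b =>
      if grayB m (a + 1, b) then
        segment ℝ ((a : ℝ), (b : ℝ) + 1 / 2) ((a : ℝ) + 2, (b : ℝ) + 1 / 2)
      else ∅
  | .vert a b =>
      if grayB m (a, b + 1) then
        segment ℝ ((a : ℝ), (b : ℝ) + 1 / 2) ((a : ℝ) + 1, (b : ℝ) + 3 / 2)
      else
        segment ℝ ((a : ℝ), (b : ℝ) + 3 / 2) ((a : ℝ) + 1, (b : ℝ) + 1 / 2)

/-- `P` is the family of paths of the tiling `T`: the `i`-th path runs from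
`(-m-1+i, 1/2-i)` to `(m+1-i, 1/2-i)`, the paths are pairwise disjoint, and together they
trace out exactly the segments drawn on the dominos of `T`. -/
def IsPathFamily (m : ℕ) (T : Tiling m) (P : Fin m → List Step) : Prop :=
  (∀ i : Fin m, endpt (startPt m i) (P i) = finishPt m i) ∧
  (∀ i j : Fin m, i ≠ j →
    Disjoint (pathSet (startPt m i) (P i)) (pathSet (startPt m j) (P j))) ∧
  (⋃ i : Fin m, pathSet (startPt m i) (P i)) = ⋃ d ∈ T.dominos, dominoSeg m d

/-- The list of steps of a path starting at `p`, each recorded as the pair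
(ending point of the step, type of the step). -/
def stepList : ℝ × ℝ → List Step → List ((ℝ × ℝ) × Step)
  | _, [] => []
  | p, s :: rest => (p + s.vec, s) :: stepList (p + s.vec) rest

/-- An interaction between the path family `P` of a smaller color and the path family
`P'` of a larger color: a step `e` of a path of `P` and a step `f` of a path of `P'`
ending at the same point, whose pair of step types is `((1,-1),(2,0))`, `((1,1),(1,1))`,
`((2,0),(1,1))` or `((1,-1),(1,1))`. -/
def StepInteraction (m : ℕ) (P P' : Fin m → List Step) : Prop :=
  ∃ i i' : Fin m, ∃ q : ℝ × ℝ, ∃ s s' : Step,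
    (q, s) ∈ stepList (startPt m i) (P i) ∧
    (q, s') ∈ stepList (startPt m i') (P' i') ∧
    ((s = .down ∧ s' = .flat) ∨ (s = .up ∧ s' = .up) ∨
      (s = .flat ∧ s' = .up) ∨ (s = .down ∧ s' = .up))

noncomputable def slopeR : Step → ℝ
  | .up => 1
  | .down => -1
  | .flat => 0

noncomputable def yAt : ℝ × ℝ → List Step → ℝ → ℝ
  | p, [], _ => p.2
  | p, s :: L, x =>
      if x < p.1 + (s.vec).1 then p.2 + slopeR s * (x - p.1) else yAt (p + s.vec) L x

lemma vec_fst_pos (s : Step) : 0 < (s.vec).1 := by cases s <;> norm_num [Step.vec]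

lemma vec_snd_eq (s : Step) : (s.vec).2 = slopeR s * (s.vec).1 := by
  cases s <;> norm_num [Step.vec, slopeR]

lemma mem_segment_iff {p v q : ℝ × ℝ} :
    q ∈ segment ℝ p (p + v) ↔
      ∃ t : ℝ, 0 ≤ t ∧ t ≤ 1 ∧ q.1 = p.1 + t * v.1 ∧ q.2 = p.2 + t * v.2 := by
  rw [segment_eq_image']
  simp only [add_sub_cancel_left, Set.mem_image, Set.mem_Icc]
  constructor
  · rintro ⟨t, ⟨ht0, ht1⟩, rfl⟩
    exact ⟨t, ht0, ht1, by simp [smul_eq_mul], by simp [smul_eq_mul]⟩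
  · rintro ⟨t, ht0, ht1, h1, h2⟩
    refine ⟨t, ⟨ht0, ht1⟩, ?_⟩
    have : (p + t • v).1 = q.1 := by simp [smul_eq_mul, h1]
    have h2' : (p + t • v).2 = q.2 := by simp [smul_eq_mul, h2]
    exact Prod.ext this h2'

lemma pathSet_fst_lb {L : List Step} {p q : ℝ × ℝ} (h : q ∈ pathSet p L) : p.1 ≤ q.1 := by
  induction L generalizing p with
  | nil => simp only [pathSet, Set.mem_singleton_iff] at h; rw [h]
  | cons s L ih =>
      rcases h with h | h
      · obtain ⟨t, ht0, ht1, hx, _⟩ := mem_segment_iff.mp h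
        nlinarith [vec_fst_pos s]
      · have h1 := ih h
        have h2 := vec_fst_pos s
        have : (p + s.vec).1 = p.1 + (s.vec).1 := rfl
        linarith [this ▸ h1]

lemma yAt_start (p : ℝ × ℝ) (L : List Step) : yAt p L p.1 = p.2 := by
  cases L with
  | nil => rfl
  | cons s L =>
      simp only [yAt]
      rw [if_pos (by linarith [vec_fst_pos s])]
      ring

lemma eq_yAt {L : List Step} {p q : ℝ × ℝ} (h : q ∈ pathSet p L) : q.2 = yAt p L q.1 := by
  induction L generalizing p with
  | nil => simp only [pathSet, Set.mem_singleton_iff] at h; rw [h]; rfl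
  | cons s L ih =>
      rcases h with h | h
      · obtain ⟨t, ht0, ht1, hx, hy⟩ := mem_segment_iff.mp h
        simp only [yAt]
        by_cases hlt : q.1 < p.1 + (s.vec).1
        · rw [if_pos hlt, hx, hy, vec_snd_eq s]; ring
        · rw [if_neg hlt]
          have hvx := vec_fst_pos s
          have hxe : q.1 = p.1 + (s.vec).1 := by nlinarith
          have ht : t = 1 := by nlinarith [hx, hxe]
          have : q.1 = (p + s.vec).1 := hxe
          rw [this, yAt_start]
          have : (p + s.vec).2 = p.2 + (s.vec).2 := rfl
          rw [this, hy, ht, one_mul]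
      · have hge : p.1 + (s.vec).1 ≤ q.1 := pathSet_fst_lb h
        simp only [yAt]
        rw [if_neg (not_lt.mpr hge)]
        exact ih h

lemma start_mem_pathSet (p : ℝ × ℝ) (L : List Step) : p ∈ pathSet p L := by
  cases L with
  | nil => rfl
  | cons s L => exact Or.inl (left_mem_segment ℝ p (p + s.vec))

lemma endpt_mem_pathSet (p : ℝ × ℝ) (L : List Step) : endpt p L ∈ pathSet p L := by
  induction L generalizing p with
  | nil => rfl
  | cons s L ih => exact Or.inr (ih (p + s.vec))

lemma stepList_mem_pathSet {p q : ℝ × ℝ} {s : Step} {L : List Step}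
    (h : (q, s) ∈ stepList p L) : q ∈ pathSet p L := by
  induction L generalizing p with
  | nil => simp [stepList] at h
  | cons s' L ih =>
      simp only [stepList, List.mem_cons] at h
      rcases h with h | h
      · have hq : q = p + s'.vec := congrArg Prod.fst h
        rw [hq]
        exact Or.inl (right_mem_segment ℝ p (p + s'.vec))
      · exact Or.inr (ih h)

/-- `E`-value parity: `h + n - b = 2k + r`. -/
def EOdd (b n h r : ℝ) : Prop := ∃ k : ℤ, h + n - b = 2 * k + r

/-- `yAt` is linear with slope `σ` on `[n, n+1]`. -/
def LinOn (p : ℝ × ℝ) (L : List Step) (n σ : ℝ) : Prop :=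
  ∀ x, n ≤ x → x ≤ n + 1 → yAt p L x = yAt p L n + σ * (x - n)

/-- Classification of the behaviour of a path on a unit interval `[n, n+1]`. -/
def UnitCase (p : ℝ × ℝ) (L : List Step) (n : ℝ) : Prop :=
  (LinOn p L n 1 ∧ ((n + 1, yAt p L n + 1), Step.up) ∈ stepList p L ∧
      EOdd (p.1 + p.2) n (yAt p L n) 0) ∨
  (LinOn p L n (-1) ∧ ((n + 1, yAt p L n - 1), Step.down) ∈ stepList p L ∧
      EOdd (p.1 + p.2) n (yAt p L n) 0) ∨
  (LinOn p L n 0 ∧ ((n + 1, yAt p L n), Step.flat) ∈ stepList p L ∧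
      EOdd (p.1 + p.2) n (yAt p L n) 1) ∨
  (LinOn p L n 0 ∧ EOdd (p.1 + p.2) n (yAt p L n) 0)

lemma yAt_shift {p : ℝ × ℝ} {s : Step} {L : List Step} {x : ℝ}
    (h : p.1 + (s.vec).1 ≤ x) : yAt p (s :: L) x = yAt (p + s.vec) L x := by
  simp only [yAt]
  rw [if_neg (not_lt.mpr h)]

lemma yAt_head {p : ℝ × ℝ} {s : Step} {L : List Step} {x : ℝ}
    (h1 : p.1 ≤ x) (h2 : x ≤ p.1 + (s.vec).1) :
    yAt p (s :: L) x = p.2 + slopeR s * (x - p.1) := by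
  rcases lt_or_eq_of_le h2 with h | h
  · simp only [yAt]; rw [if_pos h]
  · rw [h, yAt_shift le_rfl]
    have hx : p.1 + (s.vec).1 = (p + s.vec).1 := rfl
    rw [hx, yAt_start]
    show p.2 + (s.vec).2 = _
    rw [vec_snd_eq s]
    show p.2 + slopeR s * s.vec.1 = p.2 + slopeR s * (p.1 + s.vec.1 - p.1)
    ring

lemma EOdd_shift {b b' n h r : ℝ} (j : ℤ) (hb : b' = b + 2 * j) (he : EOdd b' n h r) :
    EOdd b n h r := by
  obtain ⟨k, hk⟩ := he
  exact ⟨k + j, by push_cast; rw [hb] at hk; push_cast at hk; linarith⟩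

lemma UnitCase_cons {p : ℝ × ℝ} {s : Step} {L : List Step} {n : ℝ}
    (hge : p.1 + (s.vec).1 ≤ n) (huc : UnitCase (p + s.vec) L n) : UnitCase p (s :: L) n := by
  have hy : ∀ x, n ≤ x → yAt p (s :: L) x = yAt (p + s.vec) L x := fun x hx =>
    yAt_shift (le_trans hge hx)
  have hyn := hy n le_rfl
  have hb : ∃ j : ℤ, ((p + s.vec).1 + (p + s.vec).2) = (p.1 + p.2) + 2 * j := by
    cases s
    · exact ⟨1, by show p.1 + 1 + (p.2 + 1) = _; push_cast; ring⟩
    · exact ⟨0, by show p.1 + 1 + (p.2 + (-1)) = _; push_cast; ring⟩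
    · exact ⟨1, by show p.1 + 2 + (p.2 + 0) = _; push_cast; ring⟩
  obtain ⟨j, hj⟩ := hb
  have hlin : ∀ σ : ℝ, LinOn (p + s.vec) L n σ → LinOn p (s :: L) n σ := by
    intro σ hl x hx1 hx2
    rw [hy x hx1, hyn, hl x hx1 hx2]
  have hmem : ∀ q : (ℝ × ℝ) × Step, q ∈ stepList (p + s.vec) L → q ∈ stepList p (s :: L) :=
    fun q hq => List.mem_cons_of_mem _ hq
  rcases huc with ⟨hl, hw, he⟩ | ⟨hl, hw, he⟩ | ⟨hl, hw, he⟩ | ⟨hl, he⟩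
  · exact Or.inl ⟨hlin 1 hl, by rw [hyn]; exact hmem _ hw, by rw [hyn]; exact EOdd_shift j hj he⟩
  · exact Or.inr (Or.inl ⟨hlin (-1) hl, by rw [hyn]; exact hmem _ hw,
      by rw [hyn]; exact EOdd_shift j hj he⟩)
  · exact Or.inr (Or.inr (Or.inl ⟨hlin 0 hl, by rw [hyn]; exact hmem _ hw,
      by rw [hyn]; exact EOdd_shift j hj he⟩))
  · exact Or.inr (Or.inr (Or.inr ⟨hlin 0 hl, by rw [hyn]; exact EOdd_shift j hj he⟩))

lemma unit_step : ∀ (L : List Step) (p : ℝ × ℝ) (k : ℕ) (n : ℝ),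
    n = p.1 + k → n + 1 ≤ (endpt p L).1 → UnitCase p L n := by
  intro L
  induction L with
  | nil =>
      intro p k n hn hend
      exfalso
      have : (endpt p [] : ℝ × ℝ) = p := rfl
      rw [this] at hend
      have : (0:ℝ) ≤ k := Nat.cast_nonneg k
      linarith
  | cons s L ih =>
      intro p k n hn hend
      have hend' : n + 1 ≤ (endpt (p + s.vec) L).1 := hend
      cases s with
      | up =>
          match k with
          | 0 =>
              simp only [Nat.cast_zero, add_zero] at hn
              subst hn
              have hv1 : (Step.up.vec).1 = 1 := rfl
              have hyn : yAt p (Step.up :: L) p.1 = p.2 := yAt_start _ _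
              refine Or.inl ⟨?_, ?_, ?_⟩
              · intro x hx1 hx2
                rw [yAt_head hx1 (by rw [hv1]; linarith), hyn]
                show p.2 + 1 * (x - p.1) = _
                ring
              · rw [hyn]
                have : ((p.1 + 1, p.2 + 1), Step.up) = (p + Step.up.vec, Step.up) := rfl
                rw [this]
                exact List.mem_cons_self
              · exact ⟨0, by rw [hyn]; push_cast; ring⟩
          | (k' + 1) =>
              apply UnitCase_cons (s := Step.up)
              · show p.1 + 1 ≤ n
                rw [hn]; push_cast; linarith
              · exact ih (p + Step.up.vec) k' n (by rw [hn]; show _ = p.1 + 1 + _; push_cast; ring) hend'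
      | down =>
          match k with
          | 0 =>
              simp only [Nat.cast_zero, add_zero] at hn
              subst hn
              have hv1 : (Step.down.vec).1 = 1 := rfl
              have hyn : yAt p (Step.down :: L) p.1 = p.2 := yAt_start _ _
              refine Or.inr (Or.inl ⟨?_, ?_, ?_⟩)
              · intro x hx1 hx2
                rw [yAt_head hx1 (by rw [hv1]; linarith), hyn]
                show p.2 + (-1) * (x - p.1) = _
                ring
              · rw [hyn]
                have : (((p.1 + 1, p.2 - 1) : ℝ × ℝ), Step.down) = (p + Step.down.vec, Step.down) :=
                  Prod.ext (Prod.ext rfl (by show p.2 - 1 = p.2 + (-1); ring)) rfl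
                rw [this]
                exact List.mem_cons_self
              · exact ⟨0, by rw [hyn]; push_cast; ring⟩
          | (k' + 1) =>
              apply UnitCase_cons (s := Step.down)
              · show p.1 + 1 ≤ n
                rw [hn]; push_cast; linarith
              · exact ih (p + Step.down.vec) k' n
                  (by rw [hn]; show _ = p.1 + 1 + _; push_cast; ring) hend'
      | flat =>
          match k with
          | 0 =>
              simp only [Nat.cast_zero, add_zero] at hn
              subst hn
              have hv1 : (Step.flat.vec).1 = 2 := rfl
              have hyn : yAt p (Step.flat :: L) p.1 = p.2 := yAt_start _ _
              refine Or.inr (Or.inr (Or.inr ⟨?_, ?_⟩))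
              · intro x hx1 hx2
                rw [yAt_head hx1 (by rw [hv1]; linarith), hyn]
                show p.2 + 0 * (x - p.1) = _
                ring
              · exact ⟨0, by rw [hyn]; push_cast; ring⟩
          | 1 =>
              have hn' : n = p.1 + 1 := by rw [hn]; norm_num
              subst hn'
              have hv1 : (Step.flat.vec).1 = 2 := rfl
              have hyn : yAt p (Step.flat :: L) (p.1 + 1) = p.2 := by
                rw [yAt_head (by linarith) (by rw [hv1]; linarith)]
                show p.2 + 0 * _ = _
                ring
              refine Or.inr (Or.inr (Or.inl ⟨?_, ?_, ?_⟩))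
              · intro x hx1 hx2
                rw [yAt_head (by linarith) (by rw [hv1]; linarith), hyn]
                show p.2 + 0 * (x - p.1) = _
                ring
              · rw [hyn]
                have : (((p.1 + 1 + 1, p.2) : ℝ × ℝ), Step.flat) = (p + Step.flat.vec, Step.flat) :=
                  Prod.ext (Prod.ext (by show p.1 + 1 + 1 = p.1 + 2; ring)
                    (by show p.2 = p.2 + 0; ring)) rfl
                rw [this]
                exact List.mem_cons_self
              · exact ⟨0, by rw [hyn]; push_cast; ring⟩
          | (k' + 2) =>
              apply UnitCase_cons (s := Step.flat)
              · show p.1 + 2 ≤ n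
                rw [hn]; push_cast; linarith
              · exact ih (p + Step.flat.vec) k' n
                  (by rw [hn]; show _ = p.1 + 2 + _; push_cast; ring) hend'

lemma UnitCase.lin {p : ℝ × ℝ} {L : List Step} {n : ℝ} (h : UnitCase p L n) :
    ∃ σ : ℝ, (σ = 1 ∨ σ = -1 ∨ σ = 0) ∧ LinOn p L n σ := by
  rcases h with ⟨l, _, _⟩ | ⟨l, _, _⟩ | ⟨l, _, _⟩ | ⟨l, _⟩
  · exact ⟨1, Or.inl rfl, l⟩
  · exact ⟨-1, Or.inr (Or.inl rfl), l⟩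
  · exact ⟨0, Or.inr (Or.inr rfl), l⟩
  · exact ⟨0, Or.inr (Or.inr rfl), l⟩

lemma UnitCase.int_next {p : ℝ × ℝ} {L : List Step} {n : ℝ} (h : UnitCase p L n) :
    ∃ z : ℤ, yAt p L (n + 1) + (n + 1) - (p.1 + p.2) = z := by
  rcases h with ⟨l, _, k, hk⟩ | ⟨l, _, k, hk⟩ | ⟨l, _, k, hk⟩ | ⟨l, k, hk⟩
  · exact ⟨2 * k + 2, by have := l (n + 1) (by linarith) le_rfl; push_cast; linarith⟩
  · exact ⟨2 * k, by have := l (n + 1) (by linarith) le_rfl; push_cast; linarith⟩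
  · exact ⟨2 * k + 2, by have := l (n + 1) (by linarith) le_rfl; push_cast; linarith⟩
  · exact ⟨2 * k + 1, by have := l (n + 1) (by linarith) le_rfl; push_cast; linarith⟩

lemma cross_contra {m : ℕ} {P₁ P₂ : Fin m → List Step} (hno : ¬ StepInteraction m P₁ P₂)
    (i i' : Fin m) (n : ℝ)
    (hb : (startPt m i).1 + (startPt m i).2 = (startPt m i').1 + (startPt m i').2)
    (hc1 : UnitCase (startPt m i) (P₁ i) n) (hc2 : UnitCase (startPt m i') (P₂ i') n)
    (hlt : yAt (startPt m i') (P₂ i') n < yAt (startPt m i) (P₁ i) n)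
    (hle : yAt (startPt m i) (P₁ i) (n + 1) ≤ yAt (startPt m i') (P₂ i') (n + 1)) : False := by
  rcases hc1 with ⟨l1, w1, k1, hk1⟩ | ⟨l1, w1, k1, hk1⟩ | ⟨l1, w1, k1, hk1⟩ | ⟨l1, k1, hk1⟩ <;>
    rcases hc2 with ⟨l2, w2, k2, hk2⟩ | ⟨l2, w2, k2, hk2⟩ | ⟨l2, w2, k2, hk2⟩ | ⟨l2, k2, hk2⟩ <;>
    have e1 := l1 (n + 1) (by linarith) le_rfl <;>
    have e2 := l2 (n + 1) (by linarith) le_rfl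
  · linarith
  · linarith
  · linarith
  · linarith
  -- (down, up)
  · have hd : yAt (startPt m i) (P₁ i) n - yAt (startPt m i') (P₂ i') n
        = 2 * ((k1 : ℝ) - k2) := by rw [hb] at hk1; linarith
    have hz : k2 < k1 := by
      have h' : (k2 : ℝ) < k1 := by linarith
      exact_mod_cast h'
    have hz1 : (k2 : ℝ) + 1 ≤ k1 := by exact_mod_cast hz
    have heq : yAt (startPt m i) (P₁ i) n - 1 = yAt (startPt m i') (P₂ i') n + 1 := by
      linarith
    exact hno ⟨i, i', (n + 1, yAt (startPt m i) (P₁ i) n - 1), .down, .up, w1,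
      by rw [heq]; exact w2, Or.inr (Or.inr (Or.inr ⟨rfl, rfl⟩))⟩
  · linarith
  -- (down, flat-end)
  · have hd : yAt (startPt m i) (P₁ i) n - yAt (startPt m i') (P₂ i') n
        = 2 * ((k1 : ℝ) - k2) - 1 := by rw [hb] at hk1; linarith
    have hz : k2 < k1 := by
      have h' : (k2 : ℝ) < k1 := by linarith
      exact_mod_cast h'
    have hz1 : (k2 : ℝ) + 1 ≤ k1 := by exact_mod_cast hz
    have heq : yAt (startPt m i) (P₁ i) n - 1 = yAt (startPt m i') (P₂ i') n := by
      linarith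
    exact hno ⟨i, i', (n + 1, yAt (startPt m i) (P₁ i) n - 1), .down, .flat, w1,
      by rw [heq]; exact w2, Or.inl ⟨rfl, rfl⟩⟩
  -- (down, flat-mid)
  · have hd : yAt (startPt m i) (P₁ i) n - yAt (startPt m i') (P₂ i') n
        = 2 * ((k1 : ℝ) - k2) := by rw [hb] at hk1; linarith
    have hz : k2 < k1 := by
      have h' : (k2 : ℝ) < k1 := by linarith
      exact_mod_cast h'
    have hz1 : (k2 : ℝ) + 1 ≤ k1 := by exact_mod_cast hz
    linarith
  -- (flat-end, up)
  · have hd : yAt (startPt m i) (P₁ i) n - yAt (startPt m i') (P₂ i') n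
        = 2 * ((k1 : ℝ) - k2) + 1 := by rw [hb] at hk1; linarith
    have hz : k2 ≤ k1 := by
      have h' : (k2 : ℝ) - 1 < k1 := by linarith
      have h'' : k2 - 1 < k1 := by exact_mod_cast h'
      omega
    have hz1 : (k2 : ℝ) ≤ k1 := by exact_mod_cast hz
    have heq : yAt (startPt m i) (P₁ i) n = yAt (startPt m i') (P₂ i') n + 1 := by
      linarith
    exact hno ⟨i, i', (n + 1, yAt (startPt m i) (P₁ i) n), .flat, .up, w1,
      by rw [heq]; exact w2, Or.inr (Or.inr (Or.inl ⟨rfl, rfl⟩))⟩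
  · linarith
  · linarith
  · linarith
  -- (flat-mid, up)
  · have hd : yAt (startPt m i) (P₁ i) n - yAt (startPt m i') (P₂ i') n
        = 2 * ((k1 : ℝ) - k2) := by rw [hb] at hk1; linarith
    have hz : k2 < k1 := by
      have h' : (k2 : ℝ) < k1 := by linarith
      exact_mod_cast h'
    have hz1 : (k2 : ℝ) + 1 ≤ k1 := by exact_mod_cast hz
    linarith
  · linarith
  · linarith
  · linarith

lemma startPt_fst (m : ℕ) (i : Fin m) : (startPt m i).1 = -(m : ℝ) + ((i : ℕ) : ℝ) := by
  show -(m : ℝ) - 1 + (((i : ℕ) : ℝ) + 1) = _; ring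

lemma startPt_snd (m : ℕ) (i : Fin m) : (startPt m i).2 = -(1 / 2 : ℝ) - ((i : ℕ) : ℝ) := by
  show (1 : ℝ) / 2 - (((i : ℕ) : ℝ) + 1) = _; ring

lemma finishPt_fst (m : ℕ) (i : Fin m) : (finishPt m i).1 = (m : ℝ) - ((i : ℕ) : ℝ) := by
  show (m : ℝ) + 1 - (((i : ℕ) : ℝ) + 1) = _; ring

lemma finishPt_snd (m : ℕ) (i : Fin m) : (finishPt m i).2 = -(1 / 2 : ℝ) - ((i : ℕ) : ℝ) := by
  show (1 : ℝ) / 2 - (((i : ℕ) : ℝ) + 1) = _; ring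

lemma interval_locate (lo x : ℝ) (N : ℕ) (h0 : lo ≤ x) (h1 : x ≤ lo + N) :
    (∃ j : ℕ, j ≤ N ∧ x = lo + j) ∨
    (∃ j : ℕ, j + 1 ≤ N ∧ lo + j ≤ x ∧ x ≤ lo + j + 1) := by
  set r := x - lo with hr
  have hr0 : 0 ≤ r := by simp [hr]; linarith
  have hrN : r ≤ N := by simp [hr]; linarith
  set j : ℕ := ⌊r⌋.toNat with hj
  have hfl0 : 0 ≤ ⌊r⌋ := Int.floor_nonneg.mpr hr0
  have hjcast : ((j : ℕ) : ℝ) = ((⌊r⌋ : ℤ) : ℝ) := by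
    rw [hj]; exact_mod_cast congrArg (Int.cast : ℤ → ℝ) (Int.toNat_of_nonneg hfl0)
  have hjle : (j : ℝ) ≤ r := by rw [hjcast]; exact Int.floor_le r
  have hjlt : r < (j : ℝ) + 1 := by rw [hjcast]; exact Int.lt_floor_add_one r
  by_cases hint : (j : ℝ) = r
  · left
    refine ⟨j, ?_, by rw [hr] at hint; linarith⟩
    have : (j : ℝ) ≤ (N : ℝ) := by rw [hint]; exact hrN
    exact_mod_cast this
  · right
    have hlt : (j : ℝ) < r := lt_of_le_of_ne hjle hint
    have hjN : (j : ℝ) < (N : ℝ) := lt_of_lt_of_le hlt hrN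
    have : j < N := by exact_mod_cast hjN
    exact ⟨j, by omega, by rw [hr] at hlt; linarith, by rw [hr] at hjlt; linarith⟩


set_option maxHeartbeats 1000000 in
/-- In a 2-tiling of the Aztec diamond of rank `m` with no interactions, let
`g₁ i, g₂ i : ℝ → ℝ` be the piecewise-linear functions whose graphs (over
`[-m-1+i, m+1-i]`) are the `i`-th paths of the two tilings.  Then `g₁ i ≤ g₂ i` on
`[-m-1+i, m+1-i]`, and for `i ≤ m-1` we have `g₁ i > g₂ (i+1)` on `[-m+i, m-i]`. -/
theorem path_ordering_two_tiling (m : ℕ) (hm : 1 ≤ m) (T₁ T₂ : Tiling m)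
    (P₁ P₂ : Fin m → List Step)
    (h₁ : IsPathFamily m T₁ P₁) (h₂ : IsPathFamily m T₂ P₂)
    (hno : ¬ StepInteraction m P₁ P₂)
    (g₁ g₂ : Fin m → ℝ → ℝ)
    (hg₁ : ∀ i : Fin m, ∀ x ∈ Set.Icc (-(m : ℝ) + (i : ℕ)) ((m : ℝ) - (i : ℕ)),
      (x, g₁ i x) ∈ pathSet (startPt m i) (P₁ i))
    (hg₂ : ∀ i : Fin m, ∀ x ∈ Set.Icc (-(m : ℝ) + (i : ℕ)) ((m : ℝ) - (i : ℕ)),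
      (x, g₂ i x) ∈ pathSet (startPt m i) (P₂ i)) :
    ∀ i : Fin m,
      (∀ x ∈ Set.Icc (-(m : ℝ) + (i : ℕ)) ((m : ℝ) - (i : ℕ)), g₁ i x ≤ g₂ i x) ∧
      (∀ h : (i : ℕ) + 1 < m,
        ∀ x ∈ Set.Icc (-(m : ℝ) + (i : ℕ) + 1) ((m : ℝ) - (i : ℕ) - 1),
          g₂ ⟨(i : ℕ) + 1, h⟩ x < g₁ i x) := by
  obtain ⟨hend1, hdisj1, -⟩ := h₁
  obtain ⟨hend2, -, -⟩ := h₂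
  intro i
  have him : (i : ℕ) < m := i.2
  set A : ℝ := -(m : ℝ) + ((i : ℕ) : ℝ) with hAdef
  set B : ℝ := (m : ℝ) - ((i : ℕ) : ℝ) with hBdef
  set Lnat : ℕ := 2 * (m - (i : ℕ)) with hLdef
  have hLcast : (Lnat : ℝ) = 2 * ((m : ℝ) - ((i : ℕ) : ℝ)) := by
    rw [hLdef]; push_cast [Nat.cast_sub him.le]; ring
  have hAB : A + (Lnat : ℝ) = B := by rw [hLcast, hAdef, hBdef]; ring
  have hL2 : 2 ≤ Lnat := by omega
  have hA1 : (startPt m i).1 = A := startPt_fst m i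
  have hBx1 : (endpt (startPt m i) (P₁ i)).1 = B := by rw [hend1 i, finishPt_fst]
  have hBx2 : (endpt (startPt m i) (P₂ i)).1 = B := by rw [hend2 i, finishPt_fst]
  -- values at the two endpoints
  have hv1B : yAt (startPt m i) (P₁ i) B = -(1 / 2 : ℝ) - ((i : ℕ) : ℝ) := by
    have hm := eq_yAt (endpt_mem_pathSet (startPt m i) (P₁ i))
    rw [hend1 i, finishPt_fst, finishPt_snd] at hm
    exact hm.symm
  have hv2B : yAt (startPt m i) (P₂ i) B = -(1 / 2 : ℝ) - ((i : ℕ) : ℝ) := by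
    have hm := eq_yAt (endpt_mem_pathSet (startPt m i) (P₂ i))
    rw [hend2 i, finishPt_fst, finishPt_snd] at hm
    exact hm.symm
  -- discrete form of the first claim
  have key1 : ∀ t j : ℕ, j + t = Lnat →
      yAt (startPt m i) (P₁ i) (A + j) ≤ yAt (startPt m i) (P₂ i) (A + j) := by
    intro t
    induction t with
    | zero =>
        intro j hj
        have hj' : j = Lnat := by omega
        subst hj'
        rw [hAB, hv1B, hv2B]
    | succ t ih =>
        intro j hj
        by_contra hcon
        push_neg at hcon
        have hj1 : j + 1 ≤ Lnat := by omega
        have hj1R : (j : ℝ) + 1 ≤ (Lnat : ℝ) := by exact_mod_cast hj1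
        have hend : A + (j : ℝ) + 1 ≤ B := by linarith [hAB]
        have hc1 : UnitCase (startPt m i) (P₁ i) (A + j) :=
      unit_step (P₁ i) (startPt m i) j (A + j) (by rw [hA1]) (by rw [hBx1]; linarith)
        have hc2 : UnitCase (startPt m i) (P₂ i) (A + j) :=
      unit_step (P₂ i) (startPt m i) j (A + j) (by rw [hA1]) (by rw [hBx2]; linarith)
        have hle := ih (j + 1) (by omega)
        have hcast : A + ((j + 1 : ℕ) : ℝ) = A + (j : ℝ) + 1 := by push_cast; ring
        rw [hcast] at hle
        exact cross_contra hno i i (A + j) rfl hc1 hc2 hcon hle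
  have key1' : ∀ j : ℕ, j ≤ Lnat →
      yAt (startPt m i) (P₁ i) (A + j) ≤ yAt (startPt m i) (P₂ i) (A + j) :=
    fun j hj => key1 (Lnat - j) j (by omega)
  constructor
  · -- first claim
    intro x hx
    obtain ⟨hx0, hx1⟩ := hx
    have hgx1 : g₁ i x = yAt (startPt m i) (P₁ i) x := eq_yAt (hg₁ i x ⟨hx0, hx1⟩)
    have hgx2 : g₂ i x = yAt (startPt m i) (P₂ i) x := eq_yAt (hg₂ i x ⟨hx0, hx1⟩)
    rw [hgx1, hgx2]
    rcases interval_locate A x Lnat hx0 (by rw [hAB]; exact hx1) with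
      ⟨j, hjN, rfl⟩ | ⟨j, hjN, hxl, hxr⟩
    · exact key1' j hjN
    · have hj1R : (j : ℝ) + 1 ≤ (Lnat : ℝ) := by exact_mod_cast hjN
      have hend : A + (j : ℝ) + 1 ≤ B := by linarith [hAB]
      have hc1 : UnitCase (startPt m i) (P₁ i) (A + j) :=
        unit_step (P₁ i) (startPt m i) j (A + j) (by rw [hA1]) (by rw [hBx1]; linarith)
      have hc2 : UnitCase (startPt m i) (P₂ i) (A + j) :=
        unit_step (P₂ i) (startPt m i) j (A + j) (by rw [hA1]) (by rw [hBx2]; linarith)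
      obtain ⟨σ1, hσ1, lin1⟩ := hc1.lin
      obtain ⟨σ2, hσ2, lin2⟩ := hc2.lin
      have v1 := lin1 x hxl hxr
      have v2 := lin2 x hxl hxr
      have d0 := key1' j (by omega)
      have d1 := key1' (j + 1) hjN
      have hcast : A + ((j + 1 : ℕ) : ℝ) = A + (j : ℝ) + 1 := by push_cast; ring
      rw [hcast] at d1
      have e1 := lin1 (A + (j : ℝ) + 1) (by linarith) le_rfl
      have e2 := lin2 (A + (j : ℝ) + 1) (by linarith) le_rfl
      rw [v1, v2]
      rcases hσ1 with rfl | rfl | rfl <;> rcases hσ2 with rfl | rfl | rfl <;>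
        rw [e1, e2] at d1 <;> linarith [d0, d1, hxl, hxr]
  · -- second claim
    intro hi1 x hx
    set i2 : Fin m := ⟨(i : ℕ) + 1, hi1⟩ with hi2def
    have hi2v : ((i2 : ℕ) : ℝ) = ((i : ℕ) : ℝ) + 1 := by
      have : (i2 : ℕ) = (i : ℕ) + 1 := rfl
      rw [this]; push_cast; ring
    have hA2 : (startPt m i2).1 = A + 1 := by rw [startPt_fst, hi2v, hAdef]; ring
    have hY2 : (startPt m i2).2 = -(1 / 2 : ℝ) - ((i : ℕ) : ℝ) - 1 := by
      rw [startPt_snd, hi2v]; ring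
    have hBx22 : (endpt (startPt m i2) (P₂ i2)).1 = B - 1 := by
      rw [hend2 i2, finishPt_fst, hi2v, hBdef]; ring
    set L2 : ℕ := 2 * (m - ((i : ℕ) + 1)) with hL2def
    have hL2cast : (L2 : ℝ) = 2 * ((m : ℝ) - ((i : ℕ) : ℝ) - 1) := by
      rw [hL2def]; push_cast [Nat.cast_sub (by omega : (i : ℕ) + 1 ≤ m)]; ring
    have hL2L : Lnat = L2 + 2 := by omega
    have hb2 : (startPt m i).1 + (startPt m i).2 = (startPt m i2).1 + (startPt m i2).2 := by
      rw [startPt_fst, startPt_snd, startPt_fst, startPt_snd, hi2v]; ring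
    have hine : i ≠ i2 := by
      intro hq
      have : (i : ℕ) = (i : ℕ) + 1 := congrArg Fin.val hq
      omega
    have hstart1 : yAt (startPt m i) (P₁ i) A = -(1 / 2 : ℝ) - ((i : ℕ) : ℝ) := by
      rw [← hA1, yAt_start, startPt_snd]
    -- left end point comparison
    have key20 : yAt (startPt m i2) (P₂ i2) (A + 1) ≤ yAt (startPt m i) (P₁ i) (A + 1) - 1 := by
      have hv2 : yAt (startPt m i2) (P₂ i2) (A + 1) = -(1 / 2 : ℝ) - ((i : ℕ) : ℝ) - 1 := by
        rw [← hA2, yAt_start, hY2]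
      have hc1 : UnitCase (startPt m i) (P₁ i) A :=
        unit_step (P₁ i) (startPt m i) 0 A (by rw [hA1]; norm_num)
          (by rw [hBx1]; linarith [hAB, (by exact_mod_cast hL2 : (2:ℝ) ≤ (Lnat : ℝ))])
      have hnotdown : yAt (startPt m i) (P₁ i) (A + 1) ≠ -(1 / 2 : ℝ) - ((i : ℕ) : ℝ) - 1 := by
        intro hbad
        have hmem1 : ((A + 1, yAt (startPt m i) (P₁ i) (A + 1)) : ℝ × ℝ)
            ∈ pathSet (startPt m i) (P₁ i) := by
          have hx1 : A + 1 ∈ Set.Icc A B := by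
            constructor
            · linarith
            · have : (2 : ℝ) ≤ (Lnat : ℝ) := by exact_mod_cast hL2
              linarith [hAB]
          have := hg₁ i (A + 1) hx1
          have heq := eq_yAt this
          have : ((A + 1, g₁ i (A + 1)) : ℝ × ℝ) = (A + 1, yAt (startPt m i) (P₁ i) (A + 1)) :=
            Prod.ext rfl heq
          rw [← this]
          exact hg₁ i (A + 1) hx1
        have hqq : ((A + 1, yAt (startPt m i) (P₁ i) (A + 1)) : ℝ × ℝ) = startPt m i2 := by
          refine Prod.ext ?_ ?_
          · rw [hA2]
          · rw [hbad, hY2]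
        have hmem2 : startPt m i2 ∈ pathSet (startPt m i2) (P₁ i2) := start_mem_pathSet _ _
        exact Set.disjoint_left.mp (hdisj1 i i2 hine) hmem1 (hqq ▸ hmem2)
      obtain ⟨σ1, hσ1, lin1⟩ := hc1.lin
      have e1 := lin1 (A + 1) (by linarith) le_rfl
      rw [hstart1] at e1
      rcases hσ1 with rfl | rfl | rfl
      · rw [hv2]; rw [e1]; norm_num
      · exfalso; apply hnotdown; rw [e1]; ring
      · rw [hv2]; rw [e1]; norm_num
    -- the down case is impossible at the left end, so the above holds; now induct
    have key2 : ∀ j : ℕ, j ≤ L2 →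
        yAt (startPt m i2) (P₂ i2) (A + 1 + j) ≤ yAt (startPt m i) (P₁ i) (A + 1 + j) - 1 := by
      intro j
      induction j with
      | zero => intro _; simpa using key20
      | succ j ih =>
          intro hj
          have ihj := ih (by omega)
          by_contra hcon
          push_neg at hcon
          have hjR : (j : ℝ) + 1 ≤ (L2 : ℝ) := by exact_mod_cast hj
          have hc1 : UnitCase (startPt m i) (P₁ i) (A + 1 + j) :=
            unit_step (P₁ i) (startPt m i) (j + 1) (A + 1 + j)
              (by rw [hA1]; push_cast; ring)
              (by rw [hBx1]
                  have : (Lnat : ℝ) = (L2 : ℝ) + 2 := by exact_mod_cast hL2L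
                  linarith [hAB])
          have hc2 : UnitCase (startPt m i2) (P₂ i2) (A + 1 + j) :=
            unit_step (P₂ i2) (startPt m i2) j (A + 1 + j)
              (by rw [hA2]) (by rw [hBx22]; linarith [hAB, hL2cast, hLcast])
          have hlt : yAt (startPt m i2) (P₂ i2) (A + 1 + j)
              < yAt (startPt m i) (P₁ i) (A + 1 + j) := by linarith
          have hle : yAt (startPt m i) (P₁ i) (A + 1 + j + 1)
              ≤ yAt (startPt m i2) (P₂ i2) (A + 1 + j + 1) := by
            obtain ⟨z1, hz1⟩ := hc1.int_next
            obtain ⟨z2, hz2⟩ := hc2.int_next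
            rw [← hb2] at hz2
            have hcast : A + 1 + ((j + 1 : ℕ) : ℝ) = A + 1 + (j : ℝ) + 1 := by push_cast; ring
            rw [hcast] at hcon
            have hzz : (z1 : ℝ) - (z2 : ℝ) < 1 := by linarith
            have hzz' : z1 - z2 < 1 := by exact_mod_cast hzz
            have hzz'' : (z1 : ℝ) ≤ (z2 : ℝ) := by exact_mod_cast (by omega : z1 ≤ z2)
            linarith
          exact cross_contra hno i i2 (A + 1 + j) hb2 hc1 hc2 hlt hle
    -- pointwise strict inequality
    obtain ⟨hx0, hx1⟩ := hx
    have hx0' : A + 1 ≤ x := hx0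
    have hx1' : x ≤ B - 1 := hx1
    have hxIcc1 : x ∈ Set.Icc A B := by
      constructor
      · linarith
      · linarith
    have hxIcc2 : x ∈ Set.Icc (-(m : ℝ) + ((i2 : ℕ) : ℝ)) ((m : ℝ) - ((i2 : ℕ) : ℝ)) := by
      rw [hi2v]
      constructor
      · rw [hAdef] at hx0'; linarith
      · rw [hBdef] at hx1'; linarith
    have hgx1 : g₁ i x = yAt (startPt m i) (P₁ i) x := eq_yAt (hg₁ i x hxIcc1)
    have hgx2 : g₂ i2 x = yAt (startPt m i2) (P₂ i2) x := eq_yAt (hg₂ i2 x hxIcc2)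
    rw [hgx1, hgx2]
    rcases interval_locate (A + 1) x L2 hx0' (by linarith [hL2cast]) with
      ⟨j, hjN, rfl⟩ | ⟨j, hjN, hxl, hxr⟩
    · have := key2 j hjN
      linarith
    · have hjR : (j : ℝ) + 1 ≤ (L2 : ℝ) := by exact_mod_cast hjN
      have hc1 : UnitCase (startPt m i) (P₁ i) (A + 1 + j) :=
        unit_step (P₁ i) (startPt m i) (j + 1) (A + 1 + j)
          (by rw [hA1]; push_cast; ring)
          (by rw [hBx1]
              have : (Lnat : ℝ) = (L2 : ℝ) + 2 := by exact_mod_cast hL2L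
              linarith [hAB])
      have hc2 : UnitCase (startPt m i2) (P₂ i2) (A + 1 + j) :=
        unit_step (P₂ i2) (startPt m i2) j (A + 1 + j)
          (by rw [hA2]) (by rw [hBx22]; linarith [hAB, hL2cast, hLcast])
      obtain ⟨σ1, hσ1, lin1⟩ := hc1.lin
      obtain ⟨σ2, hσ2, lin2⟩ := hc2.lin
      have v1 := lin1 x hxl hxr
      have v2 := lin2 x hxl hxr
      have d0 := key2 j (by omega)
      have d1 := key2 (j + 1) hjN
      have hcast : A + 1 + ((j + 1 : ℕ) : ℝ) = A + 1 + (j : ℝ) + 1 := by push_cast; ring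
      rw [hcast] at d1
      have e1 := lin1 (A + 1 + (j : ℝ) + 1) (by linarith) le_rfl
      have e2 := lin2 (A + 1 + (j : ℝ) + 1) (by linarith) le_rfl
      rw [v1, v2]
      rcases hσ1 with rfl | rfl | rfl <;> rcases hσ2 with rfl | rfl | rfl <;>
        rw [e1, e2] at d1 <;> linarith [d0, d1, hxl, hxr]

end Aztec
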